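/- If player A has a winning strategy in the Domino game Γ(𝒜, ℱ, ℤ^d) for a subshift of finite type (𝒜, ℱ), then A has a computable winning strategy. -/

import Mathlib

open Filter Topology

attribute [local instance] Classical.propDecidable

/-- The two players. -/
inductive Player | A | B
deriving DecidableEq

/-- A cell of the grid `ℤ^d`. -/
abbrev Cell (d : ℕ) := Fin d → ℤ

/-- A (possibly partial) colouring of the grid: `none` means uncoloured.
Colours are natural numbers; the alphabet of size `m` is `{0, …, m-1}`. -/
abbrev Board (d : ℕ) := Cell d → Option ℕ

/-- A finite pattern, encoded as a list of tiles (cell, colour). -/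
abbrev PatternCode (d : ℕ) := List (Cell d × ℕ)

/-- A move: `none` is a pass, `some (i, a)` colours cell `i` with colour `a`. -/
abbrev MoveD (d : ℕ) := Option (Cell d × ℕ)

/-- Code for an SFT: alphabet size together with the list of forbidden patterns. -/
abbrev SFTCode (d : ℕ) := ℕ × List (PatternCode d)

/-- A (positional) strategy: a move for every position. -/
abbrev Strategy (d : ℕ) := Board d → MoveD d

def emptyBoard (d : ℕ) : Board d := fun _ => none

/-- The pattern `p` occurs in the board `x` translated by `t`. -/
def occursAt {d : ℕ} (p : PatternCode d) (x : Board d) (t : Cell d) : Prop :=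
  ∀ q ∈ p, x (t + q.1) = some q.2

/-- A position is final when a translate of some forbidden pattern occurs. -/
def isFinal {d : ℕ} (F : List (PatternCode d)) (x : Board d) : Prop :=
  ∃ p ∈ F, ∃ t : Cell d, occursAt p x t

/-- Legality of a move in the game with alphabet `{0,…,m-1}` played on `E`:
a pass is always legal, and a colouring move must pick an uncoloured cell of `E`
and a colour of the alphabet. -/
def legalMove {d : ℕ} (m : ℕ) (E : Set (Cell d)) (x : Board d) : MoveD d → Prop
  | none => True
  | some (i, a) => i ∈ E ∧ x i = none ∧ a < m

def applyMove {d : ℕ} (x : Board d) : MoveD d → Board d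
  | none => x
  | some (i, a) => Function.update x i (some a)

/-- One step of the game: the move proposed by the strategy is played if legal
(an illegal move is treated as a pass). -/
noncomputable def step {d : ℕ} (m : ℕ) (E : Set (Cell d)) (st : Strategy d)
    (x : Board d) : Board d :=
  if legalMove m E x (st x) then applyMove x (st x) else x

/-- The play generated by strategies `stA`, `stB` with turn order `s`,
starting from the empty board. -/
noncomputable def play {d : ℕ} (m : ℕ) (E : Set (Cell d)) (s : ℕ → Player)
    (stA stB : Strategy d) : ℕ → Board d
  | 0 => emptyBoard d
  | t + 1 => step m E (match s t with | .A => stA | .B => stB) (play m E s stA stB t)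

/-- The alternating turn order: `A` plays first. -/
def alt : ℕ → Player := fun t => if t % 2 = 0 then .A else .B

/-- Player `A` has a winning strategy in the Domino game with turn order `s`:
a final position is eventually reached whatever `B` plays. -/
def AWins {d : ℕ} (m : ℕ) (F : List (PatternCode d)) (E : Set (Cell d))
    (s : ℕ → Player) : Prop :=
  ∃ stA : Strategy d, ∀ stB : Strategy d, ∃ t : ℕ, isFinal F (play m E s stA stB t)

/-- Player `B` has a winning strategy in the Domino game with turn order `s`:
a final position is never reached whatever `A` plays. -/
def BWins {d : ℕ} (m : ℕ) (F : List (PatternCode d)) (E : Set (Cell d))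
    (s : ℕ → Player) : Prop :=
  ∃ stB : Strategy d, ∀ stA : Strategy d, ∀ t : ℕ, ¬ isFinal F (play m E s stA stB t)

/-- The Domino game problem on `ℤ^d` (alternating turn order, `A` first). -/
def DGame (d : ℕ) : SFTCode d → Prop :=
  fun c => AWins c.1 c.2 Set.univ alt

/-- The finite board (pattern) encoded by a list of tiles. -/
noncomputable def toBoard {d : ℕ} (l : PatternCode d) : Board d :=
  fun i => (l.find? (fun q => decide (q.1 = i))).map Prod.snd

/-- A strategy is computable if it is computable under the standard encoding of
finite patterns as lists of tiles. -/
def ComputableStrategy {d : ℕ} (st : Strategy d) : Prop :=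
  ∃ f : PatternCode d → MoveD d, Computable f ∧ ∀ l : PatternCode d, f l = st (toBoard l)


/-!
A win of `A` comes after finitely many moves, and this can be made uniform. If `A` cannot force a
final position within any bounded number of moves, `B` survives by always moving to a position
from which `A` still has no bounded win: only finitely many replies matter (a move far from every
occupied cell cannot spoil a bounded win), so the decreasing nonempty finite sets of good replies
have a common element.

A win within `K` moves on `ℤ^d` can then be replayed inside a fixed finite window. The replay
keeps each cluster of the board rigid at a scale `D k` that at least halves with each move played;
moves of `A` far from all clusters go to fresh room in the window, moves of `B` near the copy are
pulled back and the others are harmless junk. On the window the bounded game is finite, so an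
optimal move depends only on the finitely many possible contents of the window and is computable.
-/

open Metric

lemma nonempty_iInter_of_antitone {α : Type*} {S : ℕ → Set α} (hS : Antitone S)
    (hne : ∀ k, (S k).Nonempty) (hfin : (S 0).Finite) : (⋂ k, S k).Nonempty := by
  by_contra hempty
  have hout : ∀ a, ∃ k, a ∉ S k := fun a => by
    simpa [Set.mem_iInter] using fun h : a ∈ ⋂ k, S k => hempty ⟨a, h⟩
  choose K hK using hout
  obtain ⟨a, ha⟩ := hne (hfin.toFinset.sup K)
  exact hK a (hS (Finset.le_sup (hfin.mem_toFinset.2 (hS (Nat.zero_le _) ha))) ha)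

lemma dist_add_sub_self {G : Type*} [SeminormedAddCommGroup G] (c c₀ t : G) :
    dist (c + (t - c₀)) t = dist c c₀ := by
  calc dist (c + (t - c₀)) t = dist (c + (t - c₀)) (c₀ + (t - c₀)) := by rw [add_sub_cancel]
    _ = dist c c₀ := dist_add_right c c₀ (t - c₀)

lemma image_update_insert {α β : Type*} [DecidableEq α] (f : α → β) {s : Set α} {a : α}
    (ha : a ∉ s) (b : β) : Function.update f a b '' insert a s = insert b (f '' s) := by
  rw [Set.image_insert_eq, Function.update_self,
    Set.image_congr fun u hu => Function.update_of_ne (ne_of_mem_of_not_mem hu ha) b f]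

namespace DominoGame

variable {d : ℕ}

def occupied (x : Board d) : Set (Cell d) := {c | x c ≠ none}

lemma applyMove_some_apply (x : Board d) (c : Cell d) (a : ℕ) (e : Cell d) :
    applyMove x (some (c, a)) e = if e = c then some a else x e :=
  Function.update_apply x c (some a) e

lemma occupied_applyMove_some (x : Board d) (c : Cell d) (a : ℕ) :
    occupied (applyMove x (some (c, a))) = insert c (occupied x) := by
  ext e
  by_cases h : e = c <;> simp [occupied, applyMove_some_apply, h]

lemma occupied_emptyBoard : occupied (emptyBoard d) = ∅ := by
  simp [occupied, emptyBoard]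

lemma isFinal_of_le {F : List (PatternCode d)} {v x : Board d}
    (hle : ∀ c a, v c = some a → x c = some a) : isFinal F v → isFinal F x := by
  rintro ⟨p, hp, t, hocc⟩
  exact ⟨p, hp, t, fun q hq => hle _ _ (hocc q hq)⟩

section Play

variable {m : ℕ} {E : Set (Cell d)}

lemma step_eq_applyMove {st : Strategy d} {x : Board d} (h : legalMove m E x (st x)) :
    step m E st x = applyMove x (st x) :=
  if_pos h

lemma exists_legalMove_step (st : Strategy d) (x : Board d) :
    ∃ mv, legalMove m E x mv ∧ step m E st x = applyMove x mv := by
  by_cases h : legalMove m E x (st x)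
  · exact ⟨st x, h, step_eq_applyMove h⟩
  · exact ⟨none, trivial, if_neg h⟩

lemma lt_of_applyMove_eq_some {x : Board d} {mv : MoveD d} (hmv : legalMove m E x mv)
    (hx : ∀ c a, x c = some a → a < m) {c : Cell d} {a : ℕ}
    (h : applyMove x mv c = some a) : a < m := by
  match mv, hmv with
  | none, _ => exact hx c a h
  | some (c', a'), ⟨_, _, ha'⟩ =>
    rw [applyMove_some_apply] at h
    split_ifs at h
    · exact Option.some_inj.1 h ▸ ha'
    · exact hx c a h

lemma finite_occupied_applyMove {x : Board d} (hx : (occupied x).Finite) :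
    ∀ mv : MoveD d, (occupied (applyMove x mv)).Finite
  | none => hx
  | some (c, a) => by rw [occupied_applyMove_some]; exact hx.insert c

variable {s : ℕ → Player} {stA stB : Strategy d}

lemma exists_legalMove_play_succ (t : ℕ) : ∃ mv, legalMove m E (play m E s stA stB t) mv ∧
    play m E s stA stB (t + 1) = applyMove (play m E s stA stB t) mv :=
  exists_legalMove_step _ _

lemma lt_of_play_eq_some (t : ℕ) {c : Cell d} {a : ℕ}
    (h : play m E s stA stB t c = some a) : a < m := by
  induction t generalizing c a with
  | zero => simp [play, emptyBoard] at h
  | succ t ih =>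
    obtain ⟨mv, hmv, heq⟩ := exists_legalMove_play_succ (s := s) (stA := stA) (stB := stB) t
    rw [heq] at h
    exact lt_of_applyMove_eq_some hmv (fun _ _ => ih) h

lemma finite_occupied_play (t : ℕ) : (occupied (play m E s stA stB t)).Finite := by
  induction t with
  | zero => simp [play, occupied_emptyBoard]
  | succ t ih =>
    obtain ⟨mv, -, heq⟩ := exists_legalMove_play_succ (s := s) (stA := stA) (stB := stB) t
    rw [heq]
    exact finite_occupied_applyMove ih mv

lemma play_succ_of_eq_A {t : ℕ} (h : s t = .A) :
    play m E s stA stB (t + 1) = step m E stA (play m E s stA stB t) := by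
  rw [play, h]

lemma play_succ_of_eq_B {t : ℕ} (h : s t = .B) :
    play m E s stA stB (t + 1) = step m E stB (play m E s stA stB t) := by
  rw [play, h]

lemma AWins.not_bWins {F : List (PatternCode d)} (hA : AWins m F E s) : ¬ BWins m F E s := by
  rintro ⟨stB, hB⟩
  obtain ⟨stA, hA⟩ := hA
  obtain ⟨t, ht⟩ := hA stB
  exact hB stA t ht

end Play

lemma alt_succ_of_eq_A {t : ℕ} (h : alt t = .A) : alt (t + 1) = .B := by
  unfold alt at *
  split_ifs at h ⊢ <;> first | rfl | omega

lemma alt_succ_of_eq_B {t : ℕ} (h : alt t = .B) : alt (t + 1) = .A := by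
  unfold alt at *
  split_ifs at h ⊢ <;> first | rfl | omega

def AWinsWithin (m : ℕ) (F : List (PatternCode d)) (E : Set (Cell d)) :
    ℕ → Player → Board d → Prop
  | 0, _, x => isFinal F x
  | k + 1, .A, x => isFinal F x ∨
      ∃ mv, legalMove m E x mv ∧ AWinsWithin m F E k .B (applyMove x mv)
  | k + 1, .B, x => isFinal F x ∨
      ∀ mv, legalMove m E x mv → AWinsWithin m F E k .A (applyMove x mv)

namespace AWinsWithin

variable {m : ℕ} {F : List (PatternCode d)} {E : Set (Cell d)}

lemma succ : ∀ {k : ℕ} {p : Player} {x : Board d},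
    AWinsWithin m F E k p x → AWinsWithin m F E (k + 1) p x
  | 0, .A, _, h | 0, .B, _, h => Or.inl h
  | _ + 1, .A, _, .inl h | _ + 1, .B, _, .inl h => Or.inl h
  | _ + 1, .A, _, .inr ⟨mv, hmv, h⟩ => Or.inr ⟨mv, hmv, succ h⟩
  | _ + 1, .B, _, .inr h => Or.inr fun mv hmv => succ (h mv hmv)

lemma mono {j k : ℕ} {p : Player} {x : Board d} (hjk : j ≤ k) (h : AWinsWithin m F E j p x) :
    AWinsWithin m F E k p x := by
  induction k, hjk using Nat.le_induction with
  | base => exact h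
  | succ k _ ih => exact ih.succ

end AWinsWithin

/-- `D k` is the range of interaction when `k` moves remain. -/
structure IsScale (F : List (PatternCode d)) (D : ℕ → ℝ) : Prop where
  pattern_dist_le : ∀ p ∈ F, ∀ q ∈ p, ∀ q' ∈ p, dist q.1 q'.1 ≤ D 0
  pos_zero : 0 < D 0
  two_mul_le_succ : ∀ k, 2 * D k ≤ D (k + 1)

namespace IsScale

variable {F : List (PatternCode d)} {D : ℕ → ℝ} (hD : IsScale F D)
include hD

lemma pos (k : ℕ) : 0 < D k := by
  induction k with
  | zero => exact hD.pos_zero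
  | succ k ih => linarith [hD.two_mul_le_succ k]

lemma le_succ (k : ℕ) : D k ≤ D (k + 1) := by
  linarith [hD.two_mul_le_succ k, hD.pos k]

lemma monotone : Monotone D := monotone_nat_of_le_succ hD.le_succ

end IsScale

lemma exists_isScale (F : List (PatternCode d)) : ∃ D, IsScale F D := by
  let L : List ℝ := F.flatMap fun p => p.flatMap fun q => p.map fun q' => dist q.1 q'.1
  obtain ⟨R, hR⟩ := L.toFinset.bddAbove
  refine ⟨fun k => (max R 0 + 1) * 2 ^ k, ⟨fun p hp q hq q' hq' => ?_, by positivity,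
    fun k => by rw [pow_succ]; linarith⟩⟩
  have hmem : dist q.1 q'.1 ∈ L.toFinset := by
    simp only [L, List.mem_toFinset, List.mem_flatMap, List.mem_map]
    exact ⟨p, hp, q, hq, q', hq', rfl⟩
  have := hR hmem
  simp only [pow_zero, mul_one]
  linarith [le_max_left R 0]

def HasRoom (E : Set (Cell d)) (r : ℝ) (n : ℕ) : Prop :=
  ∀ S : Finset (Cell d), S.card ≤ n →
    ∃ e, (∀ s ∈ S, r < dist e s) ∧ closedBall e r ⊆ E

lemma HasRoom.mono {E E' : Set (Cell d)} {r r' : ℝ} {n n' : ℕ} (h : HasRoom E r n)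
    (hE : E ⊆ E') (hr : r' ≤ r) (hn : n' ≤ n) : HasRoom E' r' n' := by
  intro S hS
  obtain ⟨e, hfar, hball⟩ := h S (hS.trans hn)
  exact ⟨e, fun s hs => hr.trans_lt (hfar s hs),
    (closedBall_subset_closedBall hr).trans (hball.trans hE)⟩

lemma finite_closedBall (c : Cell d) (r : ℝ) : (closedBall c r).Finite :=
  (isCompact_closedBall c r).finite_of_discrete

lemma exists_finset_hasRoom (hd : 0 < d) (r : ℝ) (n : ℕ) :
    ∃ W : Finset (Cell d), HasRoom (W : Set (Cell d)) r n := by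
  -- `n + 1` centres pairwise more than `2 r` apart: `n` cells are `r`-close to at most `n` of them
  let L : ℤ := (⌈2 * r⌉₊ + 1 : ℕ)
  let e : ℕ → Cell d := fun i => Pi.single ⟨0, hd⟩ (i * L)
  have he : ∀ i j, i ≠ j → 2 * r < dist (e i) (e j) := by
    intro i j hij
    have hcoord := dist_le_pi_dist (e i) (e j) ⟨0, hd⟩
    have hL : 2 * r < L := by push_cast [L]; linarith [Nat.le_ceil (2 * r)]
    have hij' : (1 : ℝ) ≤ |(i : ℝ) - j| := by
      have : (i : ℤ) - j ≠ 0 := sub_ne_zero.2 (by exact_mod_cast hij)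
      exact_mod_cast Int.one_le_abs this
    simp only [e, Pi.single_eq_same, Int.dist_eq, Int.cast_mul, Int.cast_natCast] at hcoord ⊢
    rw [← sub_mul, abs_mul, abs_of_pos (by positivity : (0 : ℝ) < L)] at hcoord
    linarith [le_mul_of_one_le_left (by positivity : (0 : ℝ) ≤ L) hij']
  have hfin : (⋃ i ∈ Finset.range (n + 1), closedBall (e i) r).Finite :=
    (Finset.range (n + 1)).finite_toSet.biUnion fun i _ => finite_closedBall (e i) r
  refine ⟨hfin.toFinset, fun S hS => ?_⟩
  obtain ⟨i, hi, hfar⟩ : ∃ i ∈ Finset.range (n + 1), ∀ s ∈ S, r < dist (e i) s := by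
    by_contra! hclose
    choose! g hgS hg using hclose
    obtain ⟨i, hi, j, hj, hij, hgij⟩ := Finset.exists_ne_map_eq_of_card_lt_of_maps_to
      (by simpa using Nat.lt_succ_of_le hS) fun i hi => hgS i hi
    have := dist_triangle_right (e i) (e j) (g i)
    linarith [he i j hij, hg i hi, hgij ▸ hg j hj]
  refine ⟨e i, hfar, fun c hc => ?_⟩
  rw [Set.Finite.coe_toFinset]
  exact Set.mem_biUnion hi hc

lemma hasRoom_univ (hd : 0 < d) (r : ℝ) (n : ℕ) : HasRoom (Set.univ : Set (Cell d)) r n := by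
  obtain ⟨W, hW⟩ := exists_finset_hasRoom hd r n
  exact hW.mono (Set.subset_univ _) le_rfl le_rfl

/-- `τ` places a copy of `x` inside `y`: clusters of `x` at scale `D k` are translated rigidly
and stay `D k` apart, the rest of `y` is `D k`-far from the copy, the copy lies `D k`-deep inside
`E`, and `E` still has room for `k` fresh clusters. -/
structure LocalCopy (D : ℕ → ℝ) (E : Set (Cell d)) (k : ℕ) (x y : Board d)
    (τ : Cell d → Cell d) : Prop where
  apply_eq : ∀ c ∈ occupied x, y (τ c) = x c
  sub_eq : ∀ c ∈ occupied x, ∀ c' ∈ occupied x, dist c c' ≤ D k → τ c' - τ c = c' - c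
  lt_dist :
    ∀ c ∈ occupied x, ∀ c' ∈ occupied x, D k < dist c c' → D k < dist (τ c) (τ c')
  lt_dist_of_notMem_image :
    ∀ e ∈ occupied y, e ∉ τ '' occupied x → ∀ c ∈ occupied x, D k < dist e (τ c)
  closedBall_subset : ∀ c ∈ occupied x, closedBall (τ c) (D k) ⊆ E
  hasRoom : ∃ s : Finset (Cell d), ↑s = occupied y ∧ HasRoom E (D k) (s.card + k)

namespace LocalCopy

variable {F : List (PatternCode d)} {D : ℕ → ℝ} {E : Set (Cell d)} {k : ℕ} {x y : Board d}
  {τ : Cell d → Cell d}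

lemma mem_occupied (h : LocalCopy D E k x y τ) {c : Cell d} (hc : c ∈ occupied x) :
    τ c ∈ occupied y := by
  simpa [occupied, h.apply_eq c hc] using hc

lemma ne_of_eq_none (h : LocalCopy D E k x y τ) {c c' : Cell d} (hc : c ∈ occupied x)
    (hy : y c' = none) : τ c ≠ c' :=
  fun he => h.mem_occupied hc (he ▸ hy)

lemma apply_eq_add (h : LocalCopy D E k x y τ) {c₀ u : Cell d} (hc₀ : c₀ ∈ occupied x)
    (hu : u ∈ occupied x) (hdist : dist c₀ u ≤ D k) : τ u = u + (τ c₀ - c₀) := by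
  rw [sub_eq_iff_eq_add.1 (h.sub_eq c₀ hc₀ u hu hdist)]
  abel

lemma dist_apply_eq (h : LocalCopy D E k x y τ) {c c' : Cell d} (hc : c ∈ occupied x)
    (hc' : c' ∈ occupied x) (hdist : dist c c' ≤ D k) : dist (τ c) (τ c') = dist c c' := by
  rw [dist_eq_norm', h.sub_eq c hc c' hc' hdist, ← dist_eq_norm']

variable (hD : IsScale F D)
include hD

lemma mem_of_mem_occupied (h : LocalCopy D E k x y τ) {c : Cell d} (hc : c ∈ occupied x) :
    τ c ∈ E :=
  h.closedBall_subset c hc (mem_closedBall_self (hD.pos k).le)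

lemma mono (h : LocalCopy D E (k + 1) x y τ) : LocalCopy D E k x y τ := by
  have hk := hD.le_succ k
  refine ⟨h.apply_eq, fun c hc c' hc' hdist => h.sub_eq c hc c' hc' (hdist.trans hk),
    fun c hc c' hc' hdist => ?_,
    fun e he hne c hc => hk.trans_lt (h.lt_dist_of_notMem_image e he hne c hc),
    fun c hc => (closedBall_subset_closedBall hk).trans (h.closedBall_subset c hc), ?_⟩
  · by_cases hnear : dist c c' ≤ D (k + 1)
    · rwa [h.dist_apply_eq hc hc' hnear]
    · exact hk.trans_lt (h.lt_dist c hc c' hc' (not_le.1 hnear))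
  · obtain ⟨s, hs, hroom⟩ := h.hasRoom
    exact ⟨s, hs, hroom.mono subset_rfl hk (by omega)⟩

lemma isFinal_of_isFinal (h : LocalCopy D E k x y τ) : isFinal F x → isFinal F y := by
  rintro ⟨p, hp, t, hocc⟩
  rcases p with _ | ⟨q₀, p⟩
  · exact ⟨[], hp, 0, fun q hq => absurd hq List.not_mem_nil⟩
  have hmem : ∀ q ∈ q₀ :: p, t + q.1 ∈ occupied x := fun q hq => by
    simp [occupied, hocc q hq]
  refine ⟨q₀ :: p, hp, t + (τ (t + q₀.1) - (t + q₀.1)), fun q hq => ?_⟩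
  have hdist : dist (t + q₀.1) (t + q.1) ≤ D k := by
    rw [dist_add_left]
    exact (hD.pattern_dist_le _ hp q₀ List.mem_cons_self q hq).trans (hD.monotone (Nat.zero_le k))
  have := h.apply_eq_add (hmem q₀ List.mem_cons_self) (hmem q hq) hdist
  rw [show t + (τ (t + q₀.1) - (t + q₀.1)) + q.1 = τ (t + q.1) by rw [this]; abel,
    h.apply_eq _ (hmem q hq), hocc q hq]

lemma exists_hasRoom_applyMove (h : LocalCopy D E (k + 1) x y τ) (c' : Cell d) (a : ℕ) :
    ∃ s : Finset (Cell d), ↑s = occupied (applyMove y (some (c', a))) ∧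
      HasRoom E (D k) (s.card + k) := by
  obtain ⟨s, hs, hroom⟩ := h.hasRoom
  refine ⟨insert c' s, by rw [Finset.coe_insert, hs, occupied_applyMove_some], ?_⟩
  have := s.card_insert_le c'
  exact hroom.mono subset_rfl (hD.le_succ k) (by omega)

lemma extend (h : LocalCopy D E (k + 1) x y τ) {c c' : Cell d} (a : ℕ) (hxc : x c = none)
    (hyc : y c' = none) (hnear : ∀ u ∈ occupied x, dist c u ≤ D k → c' - c = τ u - u)
    (hfar : ∀ u ∈ occupied x, D k < dist c u → D k < dist c' (τ u))
    (hjunk : ∀ e ∈ occupied y, e ∉ τ '' occupied x → D k < dist e c')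
    (hball : closedBall c' (D k) ⊆ E) :
    LocalCopy D E k (applyMove x (some (c, a))) (applyMove y (some (c', a)))
      (Function.update τ c c') := by
  have h' := h.mono hD
  have hne : ∀ u ∈ occupied x, u ≠ c := fun u hu he => hu (he ▸ hxc)
  have hτ : ∀ u ∈ occupied x, Function.update τ c c' u = τ u := fun u hu =>
    Function.update_of_ne (hne u hu) _ _
  refine ⟨?_, ?_, ?_, ?_, ?_, h.exists_hasRoom_applyMove hD c' a⟩ <;>
    simp only [occupied_applyMove_some, Set.forall_mem_insert, Function.update_self]
  · refine ⟨by simp [applyMove_some_apply], fun u hu => ?_⟩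
    rw [hτ u hu, applyMove_some_apply, if_neg (h.ne_of_eq_none hu hyc), applyMove_some_apply,
      if_neg (hne u hu), h.apply_eq u hu]
  · refine ⟨⟨by simp, fun u hu hdist => ?_⟩,
      fun u hu => ⟨fun hdist => ?_, fun u' hu' hdist => ?_⟩⟩
    · rw [hτ u hu, sub_eq_sub_iff_sub_eq_sub, hnear u hu hdist]
    · rw [hτ u hu, sub_eq_sub_iff_sub_eq_sub]
      exact hnear u hu (by rwa [dist_comm])
    · rw [hτ u hu, hτ u' hu']
      exact h'.sub_eq u hu u' hu' hdist
  · refine ⟨⟨fun hdist => ?_, fun u hu hdist => ?_⟩,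
      fun u hu => ⟨fun hdist => ?_, fun u' hu' hdist => ?_⟩⟩
    · rw [dist_self] at hdist
      linarith [hD.pos k]
    · rw [hτ u hu]
      exact hfar u hu hdist
    · rw [hτ u hu, dist_comm]
      exact hfar u hu (by rwa [dist_comm])
    · rw [hτ u hu, hτ u' hu']
      exact h'.lt_dist u hu u' hu' hdist
  · rw [image_update_insert τ (show c ∉ occupied x from fun hc => hc hxc)]
    refine ⟨fun hnotin => absurd (Set.mem_insert _ _) hnotin, fun e he hnotin => ?_⟩
    have hnotin' : e ∉ τ '' occupied x := fun hmem => hnotin (Set.mem_insert_of_mem _ hmem)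
    refine ⟨hjunk e he hnotin', fun u hu => ?_⟩
    rw [hτ u hu]
    exact h'.lt_dist_of_notMem_image e he hnotin' u hu
  · refine ⟨hball, fun u hu => ?_⟩
    rw [hτ u hu]
    exact h'.closedBall_subset u hu

lemma extend_right (h : LocalCopy D E (k + 1) x y τ) {c' : Cell d} (a : ℕ) (hyc : y c' = none)
    (hfar : ∀ u ∈ occupied x, D k < dist c' (τ u)) :
    LocalCopy D E k x (applyMove y (some (c', a))) τ := by
  have h' := h.mono hD
  refine ⟨fun u hu => ?_, h'.sub_eq, h'.lt_dist, ?_, h'.closedBall_subset,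
    h.exists_hasRoom_applyMove hD c' a⟩
  · rw [applyMove_some_apply, if_neg (h.ne_of_eq_none hu hyc), h.apply_eq u hu]
  · simp only [occupied_applyMove_some, Set.forall_mem_insert]
    exact ⟨fun _ => hfar, h'.lt_dist_of_notMem_image⟩

lemma eq_none_of_dist_le (h : LocalCopy D E (k + 1) x y τ) {c c₀ : Cell d}
    (hc₀ : c₀ ∈ occupied x) (hcc₀ : dist c c₀ ≤ D k) (hxc : x c = none) :
    y (c + (τ c₀ - c₀)) = none := by
  have hk := hD.le_succ k
  have hdist := dist_add_sub_self c c₀ (τ c₀)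
  by_contra hy
  by_cases himage : c + (τ c₀ - c₀) ∈ τ '' occupied x
  · obtain ⟨u, hu, hτu⟩ := himage
    by_cases hnear : dist c₀ u ≤ D (k + 1)
    · rw [h.apply_eq_add hc₀ hu hnear, add_left_inj] at hτu
      exact hu (hτu ▸ hxc)
    · have := h.lt_dist c₀ hc₀ u hu (not_le.1 hnear)
      rw [hτu, dist_comm] at this
      linarith
  · have := h.lt_dist_of_notMem_image _ hy himage c₀ hc₀
    linarith

lemma extend_of_dist_le (h : LocalCopy D E (k + 1) x y τ) {c c₀ : Cell d} (a : ℕ)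
    (hc₀ : c₀ ∈ occupied x) (hcc₀ : dist c c₀ ≤ D k) (hxc : x c = none) :
    LocalCopy D E k (applyMove x (some (c, a))) (applyMove y (some (c + (τ c₀ - c₀), a)))
      (Function.update τ c (c + (τ c₀ - c₀))) := by
  have h2k := hD.two_mul_le_succ k
  have hpos := hD.pos k
  have hdist := dist_add_sub_self c c₀ (τ c₀)
  refine h.extend hD a hxc (h.eq_none_of_dist_le hD hc₀ hcc₀ hxc) (fun u hu hcu => ?_)
    (fun u hu hcu => ?_) (fun e he hnotin => ?_) ?_
  · have : dist c₀ u ≤ D (k + 1) := by linarith [dist_triangle c₀ c u, dist_comm c c₀]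
    rw [h.apply_eq_add hc₀ hu this]
    abel
  · by_cases hnear : dist c₀ u ≤ D (k + 1)
    · rwa [h.apply_eq_add hc₀ hu hnear, dist_add_right]
    · have := h.lt_dist c₀ hc₀ u hu (not_le.1 hnear)
      linarith [dist_triangle (τ c₀) (c + (τ c₀ - c₀)) (τ u),
        dist_comm (τ c₀) (c + (τ c₀ - c₀))]
  · have := h.lt_dist_of_notMem_image e he hnotin c₀ hc₀
    linarith [dist_triangle e (c + (τ c₀ - c₀)) (τ c₀)]
  · exact (closedBall_subset_closedBall' (by linarith)).trans (h.closedBall_subset c₀ hc₀)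

lemma exists_extend (h : LocalCopy D E (k + 1) x y τ) {c : Cell d} (a : ℕ) (hxc : x c = none) :
    ∃ c', y c' = none ∧ c' ∈ E ∧
      LocalCopy D E k (applyMove x (some (c, a))) (applyMove y (some (c', a)))
        (Function.update τ c c') := by
  by_cases hnear : ∃ c₀ ∈ occupied x, dist c c₀ ≤ D k
  · obtain ⟨c₀, hc₀, hcc₀⟩ := hnear
    have h' := h.extend_of_dist_le hD a hc₀ hcc₀ hxc
    refine ⟨_, h.eq_none_of_dist_le hD hc₀ hcc₀ hxc, ?_, h'⟩
    simpa using h'.mem_of_mem_occupied hD (c := c) (by simp [occupied_applyMove_some])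
  · push Not at hnear
    obtain ⟨s, hs, hroom⟩ := h.hasRoom
    obtain ⟨e, hfar, hball⟩ := hroom s (by omega)
    have hfar' : ∀ u ∈ occupied y, D (k + 1) < dist e u := fun u hu =>
      hfar u (Finset.mem_coe.1 (hs.symm ▸ hu))
    have hk := hD.le_succ k
    have hye : y e = none := by
      by_contra hy
      simpa using (hD.pos (k + 1)).trans (hfar' e hy)
    refine ⟨e, hye, hball (mem_closedBall_self (hD.pos (k + 1)).le), h.extend hD a hxc hye
      (fun u hu hcu => absurd hcu (not_le.2 (hnear u hu)))
      (fun u _ _ => hk.trans_lt (hfar' _ (h.mem_occupied ‹_›)))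
      (fun u hu _ => by rw [dist_comm]; exact hk.trans_lt (hfar' u hu))
      ((closedBall_subset_closedBall hk).trans hball)⟩

lemma extend_or_extend_right (h : LocalCopy D E (k + 1) x y τ) {c' : Cell d} (a : ℕ)
    (hyc : y c' = none) :
    (∃ c, x c = none ∧ LocalCopy D E k (applyMove x (some (c, a)))
        (applyMove y (some (c', a))) (Function.update τ c c')) ∨
      LocalCopy D E k x (applyMove y (some (c', a))) τ := by
  by_cases hnear : ∃ c₀ ∈ occupied x, dist c' (τ c₀) ≤ D k
  · obtain ⟨c₀, hc₀, hcc₀⟩ := hnear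
    set c := c' - (τ c₀ - c₀)
    have hc' : c + (τ c₀ - c₀) = c' := sub_add_cancel c' _
    have hcc₀' : dist c c₀ ≤ D k := by rwa [← dist_add_sub_self c c₀ (τ c₀), hc']
    have hxc : x c = none := by
      by_contra hx
      have := h.apply_eq_add hc₀ hx (by linarith [hD.le_succ k, dist_comm c c₀])
      exact h.ne_of_eq_none hx hyc (this.trans hc')
    left
    refine ⟨c, hxc, ?_⟩
    simpa only [hc'] using h.extend_of_dist_le hD a hc₀ hcc₀' hxc
  · push Not at hnear
    exact Or.inr (h.extend_right hD a hyc hnear)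

end LocalCopy

theorem aWinsWithin_of_localCopy {m : ℕ} {F : List (PatternCode d)} {D : ℕ → ℝ}
    {E : Set (Cell d)} (hD : IsScale F D) :
    ∀ {k : ℕ} {p : Player} {x y : Board d} {τ : Cell d → Cell d}, LocalCopy D E k x y τ →
      AWinsWithin m F Set.univ k p x → AWinsWithin m F E k p y
  | 0, _, _, _, _, h, hx => h.isFinal_of_isFinal hD hx
  | _ + 1, .A, _, _, _, h, .inl hx | _ + 1, .B, _, _, _, h, .inl hx =>
    .inl (h.isFinal_of_isFinal hD hx)
  | _ + 1, .A, _, _, _, h, .inr ⟨none, _, hx⟩ =>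
    .inr ⟨none, trivial, aWinsWithin_of_localCopy hD (h.mono hD) hx⟩
  | _ + 1, .A, _, _, _, h, .inr ⟨some (c, a), ⟨_, hxc, ha⟩, hx⟩ => by
    obtain ⟨c', hyc', hc'E, h'⟩ := h.exists_extend hD a hxc
    exact .inr ⟨some (c', a), ⟨hc'E, hyc', ha⟩, aWinsWithin_of_localCopy hD h' hx⟩
  | _ + 1, .B, _, _, _, h, .inr hx => .inr fun
    | none, _ => aWinsWithin_of_localCopy hD (h.mono hD) (hx none trivial)
    | some (c', a), ⟨_, hyc', ha⟩ => by
      rcases h.extend_or_extend_right hD a hyc' with ⟨c, hxc, h'⟩ | h'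
      · exact aWinsWithin_of_localCopy hD h' (hx (some (c, a)) ⟨Set.mem_univ c, hxc, ha⟩)
      · exact aWinsWithin_of_localCopy hD h' (hx none trivial)

lemma localCopy_refl {D : ℕ → ℝ} {k : ℕ} {x : Board d} (hd : 0 < d)
    (hx : (occupied x).Finite) : LocalCopy D Set.univ k x x id where
  apply_eq _ _ := rfl
  sub_eq _ _ _ _ _ := rfl
  lt_dist _ _ _ _ h := h
  lt_dist_of_notMem_image e he hnotin := absurd (by simpa using he) hnotin
  closedBall_subset _ _ := Set.subset_univ _
  hasRoom := ⟨hx.toFinset, hx.coe_toFinset, hasRoom_univ hd _ _⟩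

section Survival

variable {m : ℕ} {F : List (PatternCode d)}

lemma aWinsWithin_applyMove_of_lt_dist {D : ℕ → ℝ} (hd : 0 < d) (hD : IsScale F D) {k : ℕ}
    {p : Player} {x : Board d} (hx : (occupied x).Finite) {c : Cell d} (a : ℕ)
    (hxc : x c = none) (hfar : ∀ s ∈ occupied x, D k < dist c s)
    (h : AWinsWithin m F Set.univ k p x) :
    AWinsWithin m F Set.univ k p (applyMove x (some (c, a))) :=
  aWinsWithin_of_localCopy hD ((localCopy_refl (k := k + 1) hd hx).extend_right hD a hxc hfar) h

lemma finite_setOf_legalMove {E : Set (Cell d)} (hE : E.Finite) (x : Board d) :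
    {mv | legalMove m E x mv}.Finite := by
  refine (((hE.prod (Set.finite_Iio m)).image some).insert none).subset ?_
  rintro (_ | ⟨c, a⟩) hmv
  · exact Set.mem_insert _ _
  · exact Set.mem_insert_of_mem _ ⟨(c, a), ⟨hmv.1, hmv.2.2⟩, rfl⟩

/-- A reply far from every occupied cell cannot spoil a bounded win of `A`. -/
lemma finite_setOf_not_aWinsWithin {k : ℕ} {x : Board d}
    (hx : (occupied x).Finite) (hk : AWinsWithin m F Set.univ k .A x) :
    {mv | legalMove m Set.univ x mv ∧
      ¬ AWinsWithin m F Set.univ k .A (applyMove x mv)}.Finite := by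
  rcases Nat.eq_zero_or_pos d with rfl | hd
  · exact (finite_setOf_legalMove (m := m) Set.finite_univ x).subset fun mv hmv => hmv.1
  obtain ⟨D, hD⟩ := exists_isScale F
  refine (finite_setOf_legalMove (m := m)
    (hx.biUnion fun s _ => finite_closedBall s (D k)) x).subset ?_
  rintro (_ | ⟨c, a⟩) ⟨hmv, hlose⟩
  · trivial
  refine ⟨?_, hmv.2⟩
  by_contra hfar
  simp only [Set.mem_iUnion₂, mem_closedBall, not_exists, not_le] at hfar
  exact hlose (aWinsWithin_applyMove_of_lt_dist hd hD hx a hmv.2.1 hfar hk)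

lemma exists_legalMove_forall_not_aWinsWithin {x : Board d} (hx : (occupied x).Finite)
    (hB : ∀ k, ¬ AWinsWithin m F Set.univ k .B x) :
    ∃ mv, legalMove m Set.univ x mv ∧
      ∀ k, ¬ AWinsWithin m F Set.univ k .A (applyMove x mv) := by
  by_cases hpass : ∀ k, ¬ AWinsWithin m F Set.univ k .A x
  · exact ⟨none, trivial, hpass⟩
  push Not at hpass
  obtain ⟨k₀, hk₀⟩ := hpass
  let S : ℕ → Set (MoveD d) := fun j =>
    {mv | legalMove m Set.univ x mv ∧ ¬ AWinsWithin m F Set.univ (k₀ + j) .A (applyMove x mv)}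
  have hS : Antitone S := fun i j hij mv hmv => ⟨hmv.1, fun hw => hmv.2 (hw.mono (by omega))⟩
  have hne : ∀ j, (S j).Nonempty := fun j => by
    by_contra hemp
    refine hB (k₀ + j + 1) (Or.inr fun mv hmv => ?_)
    by_contra hlose
    exact hemp ⟨mv, hmv, hlose⟩
  obtain ⟨mv, hmv⟩ := nonempty_iInter_of_antitone hS hne (finite_setOf_not_aWinsWithin hx hk₀)
  rw [Set.mem_iInter] at hmv
  exact ⟨mv, (hmv 0).1, fun k hw => (hmv k).2 (hw.mono (by omega))⟩

variable (m F) in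
noncomputable def survivalStrategy : Strategy d := fun x =>
  if h : ∃ mv, legalMove m Set.univ x mv ∧
      ∀ k, ¬ AWinsWithin m F Set.univ k .A (applyMove x mv)
  then h.choose else none

lemma not_aWinsWithin_play_survivalStrategy
    (h0 : ∀ k, ¬ AWinsWithin m F Set.univ k .A (emptyBoard d)) (stA : Strategy d) (t : ℕ) :
    ∀ k, ¬ AWinsWithin m F Set.univ k (alt t)
      (play m Set.univ alt stA (survivalStrategy m F) t) := by
  induction t with
  | zero => exact h0
  | succ t ih =>
    cases hturn : alt t
    · rw [alt_succ_of_eq_A hturn, play_succ_of_eq_A hturn]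
      obtain ⟨mv, hmv, heq⟩ := exists_legalMove_step (m := m) (E := Set.univ) stA
        (play m Set.univ alt stA (survivalStrategy m F) t)
      rw [heq]
      intro k hk
      exact ih (k + 1) (hturn ▸ Or.inr ⟨mv, hmv, hk⟩)
    · rw [alt_succ_of_eq_B hturn, play_succ_of_eq_B hturn]
      have hex := exists_legalMove_forall_not_aWinsWithin (finite_occupied_play t) (hturn ▸ ih)
      rw [step, survivalStrategy, dif_pos hex, if_pos hex.choose_spec.1]
      exact hex.choose_spec.2

lemma exists_aWinsWithin_of_aWins (h : AWins m F Set.univ alt) :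
    ∃ K, AWinsWithin m F Set.univ K .A (emptyBoard d) := by
  by_contra! h0
  exact AWins.not_bWins h ⟨survivalStrategy m F, fun stA t hfinal =>
    not_aWinsWithin_play_survivalStrategy h0 stA t 0 hfinal⟩

end Survival

lemma exists_finset_aWinsWithin {m K : ℕ} {F : List (PatternCode d)}
    (h : AWinsWithin m F Set.univ K .A (emptyBoard d)) :
    ∃ W : Finset (Cell d), AWinsWithin m F W K .A (emptyBoard d) := by
  rcases Nat.eq_zero_or_pos d with rfl | hd
  · exact ⟨Finset.univ, by rwa [Finset.coe_univ]⟩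
  obtain ⟨D, hD⟩ := exists_isScale F
  obtain ⟨W, hW⟩ := exists_finset_hasRoom hd (D K) K
  refine ⟨W, aWinsWithin_of_localCopy hD (τ := id) ?_ h⟩
  refine ⟨?_, ?_, ?_, ?_, ?_, ⟨∅, by simp [occupied_emptyBoard], by simpa using hW⟩⟩ <;>
    simp [occupied_emptyBoard]

section Window

variable (m : ℕ) (F : List (PatternCode d)) (W : Finset (Cell d))

/-- Colours outside the alphabet are erased, so that the view takes finitely many values. -/
def windowView (x : Board d) : Board d :=
  fun c => if c ∈ W then (x c).filter (· < m) else none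

noncomputable def windowRank (v : Board d) : ℕ := sInf {k | AWinsWithin m F W k .A v}

noncomputable def windowMove (v : Board d) : MoveD d :=
  if h : ∃ mv, legalMove m W v mv ∧
      AWinsWithin m F W (windowRank m F W v - 1) .B (applyMove v mv)
  then h.choose else none

noncomputable def windowStrategy : Strategy d := fun x => windowMove m F W (windowView m W x)

variable {m F W}

lemma windowView_emptyBoard : windowView m W (emptyBoard d) = emptyBoard d := by
  funext c
  simp [windowView, emptyBoard]

lemma eq_some_of_windowView_eq_some {x : Board d} {c : Cell d} {a : ℕ}
    (h : windowView m W x c = some a) : x c = some a := by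
  unfold windowView at h
  split_ifs at h
  exact (Option.filter_eq_some_iff.1 h).1

lemma windowView_applyMove_of_mem {x : Board d} {c : Cell d} {a : ℕ} (hc : c ∈ W) (ha : a < m) :
    windowView m W (applyMove x (some (c, a))) = applyMove (windowView m W x) (some (c, a)) := by
  funext e
  by_cases he : e = c
  · subst he
    simp [windowView, applyMove_some_apply, hc, ha]
  · simp [windowView, applyMove_some_apply, he]

lemma windowView_applyMove_of_notMem {x : Board d} {c : Cell d} {a : ℕ} (hc : c ∉ W) :
    windowView m W (applyMove x (some (c, a))) = windowView m W x := by
  funext e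
  by_cases he : e = c
  · subst he
    simp [windowView, hc]
  · simp [windowView, applyMove_some_apply, he]

lemma windowMove_spec {k : ℕ} {v : Board d} (h : AWinsWithin m F W (k + 1) .A v)
    (hv : ¬ isFinal F v) :
    legalMove m W v (windowMove m F W v) ∧
      AWinsWithin m F W k .B (applyMove v (windowMove m F W v)) := by
  have hrank : AWinsWithin m F W (windowRank m F W v) .A v :=
    Nat.sInf_mem (s := {k | AWinsWithin m F W k .A v}) ⟨k + 1, h⟩
  have hle : windowRank m F W v ≤ k + 1 := Nat.sInf_le h
  obtain ⟨r, hr⟩ := Nat.exists_eq_succ_of_ne_zero (n := windowRank m F W v) fun h0 =>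
    hv (by rw [h0] at hrank; exact hrank)
  rw [hr] at hrank
  have hex : ∃ mv, legalMove m W v mv ∧
      AWinsWithin m F W (windowRank m F W v - 1) .B (applyMove v mv) := by
    rw [hr]
    exact hrank.resolve_left hv
  rw [windowMove, dif_pos hex]
  exact ⟨hex.choose_spec.1, hex.choose_spec.2.mono (by omega)⟩

lemma aWinsWithin_windowView_step_windowStrategy {k : ℕ} {x : Board d}
    (hx : ∀ c a, x c = some a → a < m) (h : AWinsWithin m F W (k + 1) .A (windowView m W x))
    (hv : ¬ isFinal F (windowView m W x)) :
    AWinsWithin m F W k .B (windowView m W (step m Set.univ (windowStrategy m F W) x)) := by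
  obtain ⟨hlegal, hwin⟩ := windowMove_spec h hv
  generalize hmv : windowMove m F W (windowView m W x) = mv at hlegal hwin
  have hst : windowStrategy m F W x = mv := hmv
  rcases mv with _ | ⟨c, a⟩
  · rwa [step_eq_applyMove (by rw [hst]; trivial), hst]
  · obtain ⟨hc, hvc, ha⟩ := hlegal
    have hxc : x c = none := by
      by_contra hxc
      obtain ⟨b, hb⟩ := Option.ne_none_iff_exists'.1 hxc
      simp only [windowView, Finset.mem_coe.1 hc, if_true, hb] at hvc
      exact absurd (hx c b hb) (by simpa using hvc)
    rwa [step_eq_applyMove (by rw [hst]; exact ⟨Set.mem_univ c, hxc, ha⟩), hst,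
      windowView_applyMove_of_mem hc ha]

lemma aWinsWithin_windowView_step {k : ℕ} (st : Strategy d) {x : Board d}
    (h : ∀ mv, legalMove m W (windowView m W x) mv →
      AWinsWithin m F W k .A (applyMove (windowView m W x) mv)) :
    AWinsWithin m F W k .A (windowView m W (step m Set.univ st x)) := by
  obtain ⟨mv, hmv, heq⟩ := exists_legalMove_step (m := m) (E := Set.univ) st x
  rw [heq]
  rcases mv with _ | ⟨c, a⟩
  · exact h none trivial
  obtain ⟨-, hxc, ha⟩ := hmv
  by_cases hc : c ∈ W
  · rw [windowView_applyMove_of_mem hc ha]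
    exact h _ ⟨hc, by simp [windowView, hc, hxc], ha⟩
  · rw [windowView_applyMove_of_notMem hc]
    exact h none trivial

theorem windowStrategy_wins {K : ℕ} (hW : AWinsWithin m F W K .A (emptyBoard d))
    (stB : Strategy d) : ∃ t, isFinal F (play m Set.univ alt (windowStrategy m F W) stB t) := by
  suffices ∀ k t, AWinsWithin m F W k (alt t)
      (windowView m W (play m Set.univ alt (windowStrategy m F W) stB t)) →
      ∃ s, isFinal F (play m Set.univ alt (windowStrategy m F W) stB s) from
    this K 0 (by rwa [play, windowView_emptyBoard])
  intro k
  induction k with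
  | zero => exact fun t h => ⟨t, isFinal_of_le (fun _ _ => eq_some_of_windowView_eq_some) h⟩
  | succ k ih =>
    intro t h
    by_cases hv : isFinal F (windowView m W (play m Set.univ alt (windowStrategy m F W) stB t))
    · exact ⟨t, isFinal_of_le (fun _ _ => eq_some_of_windowView_eq_some) hv⟩
    cases hturn : alt t <;> rw [hturn] at h
    · refine ih (t + 1) ?_
      rw [alt_succ_of_eq_A hturn, play_succ_of_eq_A hturn]
      exact aWinsWithin_windowView_step_windowStrategy (fun _ _ => lt_of_play_eq_some t) h hv
    · refine ih (t + 1) ?_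
      rw [alt_succ_of_eq_B hturn, play_succ_of_eq_B hturn]
      exact aWinsWithin_windowView_step stB (h.resolve_left hv)

end Window

lemma toBoard_apply (l : PatternCode d) (c : Cell d) : toBoard l c = l.lookup c := by
  induction l with
  | nil => rfl
  | cons q l ih =>
    obtain ⟨c', a⟩ := q
    by_cases h : c' = c
    · subst h
      simp [toBoard, List.lookup]
    · simp [toBoard, List.lookup, h, beq_false_of_ne (Ne.symm h)] at ih ⊢
      exact ih

theorem computableStrategy_of_factor {β : Type} [Primcodable β] [Finite β] (π : Board d → β)
    (hπ : Computable fun l => π (toBoard l)) {st : Strategy d}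
    (hst : ∀ x y, π x = π y → st x = st y) : ComputableStrategy st :=
  ⟨fun l => st (Function.invFun π (π (toBoard l))),
    (Primrec.dom_finite fun b => st (Function.invFun π b)).to_comp.comp hπ,
    fun _ => hst _ _ (Function.invFun_eq ⟨_, rfl⟩)⟩

section Computability

variable (m : ℕ) (W : Finset (Cell d))

noncomputable def windowProfile (x : Board d) : Fin W.toList.length → Option (Fin m) :=
  fun i => (x W.toList[i]).bind fun a => (List.finRange m)[a]?

variable {m W}

lemma computable_windowProfile_toBoard :
    Computable fun l : PatternCode d => windowProfile m W (toBoard l) := by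
  have : (fun l : PatternCode d => windowProfile m W (toBoard l)) =
      fun l i => (l.lookup W.toList[i]).bind fun a => (List.finRange m)[a]? := by
    funext l i
    rw [windowProfile, toBoard_apply]
  rw [this]
  refine (Primrec.fin_curry.2 (Primrec₂.swap (Primrec.fin_curry₁.2 fun i => ?_))).to_comp
  exact Primrec.option_bind (Primrec.listLookup.comp (Primrec.const _) Primrec.id)
    ((Primrec.list_getElem?₁ _).comp Primrec.snd)

lemma windowView_eq_of_windowProfile_eq {x y : Board d}
    (h : windowProfile m W x = windowProfile m W y) : windowView m W x = windowView m W y := by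
  have hfilter : ∀ o : Option ℕ,
      o.filter (· < m) = (o.bind fun a => (List.finRange m)[a]?).map Fin.val := by
    rintro (_ | a)
    · rfl
    · by_cases ha : a < m <;> simp [ha, Option.filter]
  funext c
  unfold windowView
  split_ifs with hc
  · obtain ⟨i, hi, rfl⟩ := List.mem_iff_getElem.1 (Finset.mem_toList.2 hc)
    rw [hfilter, hfilter]
    exact congrArg (Option.map Fin.val) (congrFun h ⟨i, hi⟩)
  · rfl

lemma computableStrategy_windowStrategy (F : List (PatternCode d)) :
    ComputableStrategy (windowStrategy m F W) :=
  computableStrategy_of_factor (windowProfile m W) computable_windowProfile_toBoard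
    fun x y h => by simp only [windowStrategy, windowView_eq_of_windowProfile_eq h]

end Computability

end DominoGame

/-- If `A` has a winning strategy in the Domino game
`Γ(𝒜, ℱ, ℤ^d)`, then `A` has a computable winning strategy. -/
theorem aWins_computable_strategy (d m : ℕ) (F : List (PatternCode d))
    (h : AWins m F Set.univ alt) :
    ∃ stA : Strategy d, ComputableStrategy stA ∧
      ∀ stB : Strategy d, ∃ t : ℕ, isFinal F (play m Set.univ alt stA stB t) := by
  obtain ⟨K, hK⟩ := DominoGame.exists_aWinsWithin_of_aWins h
  obtain ⟨W, hW⟩ := DominoGame.exists_finset_aWinsWithin hK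
  exact ⟨DominoGame.windowStrategy m F W, DominoGame.computableStrategy_windowStrategy F,
    DominoGame.windowStrategy_wins hW⟩
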